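/- Let T be a tree, ω a nonnegative weight function, and D a distribution on T that is not ω-solvable. If x and y are adjacent vertices with C_x(y) ≥ 0, then C_y(x) < 0, where C_x (resp. C_y) is the induced generalized distribution on the star consisting of x (resp. y) and all its neighbors, obtained from D − ω by iterated leaf-contraction. -/

import Mathlib

open SimpleGraph Finset

variable {V : Type*} [DecidableEq V]

/-- A single pebbling move: remove two pebbles from `u` and add one on an adjacent `v`. -/
def PebStep (G : SimpleGraph V) (D D' : V → ℕ) : Prop :=
  ∃ u v, G.Adj u v ∧ 2 ≤ D u ∧
    D' = fun x => if x = u then D u - 2 else if x = v then D v + 1 else D x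

/-- Reachability by a sequence of pebbling moves. -/
def PebReach (G : SimpleGraph V) : (V → ℕ) → (V → ℕ) → Prop :=
  Relation.ReflTransGen (PebStep G)

/-- `D` is `ω`-solvable: some sequence of pebbling moves reaches `D'` with `D' ≥ ω`. -/
def Solvable (G : SimpleGraph V) (ω D : V → ℕ) : Prop :=
  ∃ D', PebReach G D D' ∧ ∀ v, ω v ≤ D' v

/-- The `ω`-cover pebbling number: least `N` such that every distribution of
`N` pebbles is `ω`-solvable. -/
noncomputable def coverNum [Fintype V] (G : SimpleGraph V) (ω : V → ℕ) : ℕ :=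
  sInf {N | ∀ D : V → ℕ, (∑ v, D v) = N → Solvable G ω D}

/-- The `t`-pebbling number of a vertex `v`: least `N` such that from every
distribution of `N` pebbles one can move `t` pebbles onto `v`. -/
noncomputable def ftNum [Fintype V] (G : SimpleGraph V) (v : V) (t : ℕ) : ℕ :=
  sInf {N | ∀ D : V → ℕ, (∑ x, D x) = N → ∃ D', PebReach G D D' ∧ t ≤ D' v}
/-- A valid sequence of pebbling moves: `ValidSeq G D S D'` means executing the
moves of `S` in order (each move `(u,v)` removes two pebbles from `u`, which must
hold at least two, and adds one on the adjacent vertex `v`) transforms `D` into `D'`. -/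
inductive ValidSeq (G : SimpleGraph V) : (V → ℕ) → List (V × V) → (V → ℕ) → Prop
  | nil (D : V → ℕ) : ValidSeq G D [] D
  | cons (D : V → ℕ) (u v : V) (huv : G.Adj u v) (h2 : 2 ≤ D u) {S : List (V × V)}
      {D' : V → ℕ}
      (h : ValidSeq G (fun x => if x = u then D u - 2 else if x = v then D v + 1 else D x)
        S D') :
      ValidSeq G D ((u, v) :: S) D'

/-- A generalized pebbling move among vertices of `A`, on integer-valued distributions. -/
def ZStepOn (G : SimpleGraph V) (A : Set V) (C C' : V → ℤ) : Prop :=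
  ∃ u v, u ∈ A ∧ v ∈ A ∧ G.Adj u v ∧ 2 ≤ C u ∧
    C' = fun x => if x = u then C u - 2 else if x = v then C v + 1 else C x

/-- A generalized distribution is `0`-solvable within `A` if pebbling moves inside `A`
reach a distribution nonnegative on `A`. -/
def ZSolvableOn (G : SimpleGraph V) (A : Set V) (C : V → ℤ) : Prop :=
  ∃ C', Relation.ReflTransGen (ZStepOn G A) C C' ∧ ∀ x ∈ A, 0 ≤ C' x

/-- Iterated leaf contraction: `Contract G s C s' C'` means the generalized
distribution `C` on the vertex set `s` can be contracted to `C'` on `s'` by repeatedly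
deleting a leaf `x` (a vertex with a unique neighbor `y` in the current set), replacing
`C y` by `C y + ⌊C x / 2⌋` if `C x ≥ 0` and by `C y + 2 C x` if `C x < 0`. -/
inductive Contract (G : SimpleGraph V) : Finset V → (V → ℤ) → Finset V → (V → ℤ) → Prop
  | refl (s : Finset V) (C : V → ℤ) : Contract G s C s C
  | step {s : Finset V} {C : V → ℤ} (x y : V) (hx : x ∈ s) (hy : y ∈ s)
      (hadj : G.Adj x y) (hleaf : ∀ z ∈ s, G.Adj x z → z = y)
      {s' : Finset V} {C' : V → ℤ}
      (h : Contract G (s.erase x)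
        (fun w => if w = y then C y + (if 0 ≤ C x then C x / 2 else 2 * C x) else C w)
        s' C') :
      Contract G s C s' C'

/-! Leaf contraction is confluent: two contraction orders that end on the same vertex set
produce the same generalized distribution. In a tree, contracting the star of `x` down to the
edge `xy` only feeds pebbles into `x`, so `C_x(y)` is the value at `y` of the contraction of
`D - ω` onto `{x, y}`, and symmetrically `C_y(x)` is its value at `x`. If both were nonnegative,
this edge distribution would be trivially solvable. But each contraction step can be undone by
pebbling moves: a nonnegative leaf first sends `⌊C(x)/2⌋` pebbles to its neighbour, and the debt
`-C(x)` of a negative leaf is paid afterwards with `2·(-C(x))` pebbles from its neighbour. Hence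
`D` would be `ω`-solvable. -/

variable {G : SimpleGraph V}

def leafShare (c : ℤ) : ℤ := if 0 ≤ c then c / 2 else 2 * c

def leafContract (C : V → ℤ) (x y : V) : V → ℤ :=
  fun w => if w = y then C y + leafShare (C x) else C w

lemma leafContract_eq_add_single (C : V → ℤ) (x y : V) :
    leafContract C x y = C + Pi.single y (leafShare (C x)) := by
  funext w
  by_cases hw : w = y
  · subst hw; simp [leafContract]
  · simp [leafContract, hw]

lemma leafContract_comm {C : V → ℤ} {x y x' y' : V} (hx : x ≠ y') (hx' : x' ≠ y) :
    leafContract (leafContract C x y) x' y' = leafContract (leafContract C x' y') x y := by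
  simp only [leafContract_eq_add_single, Pi.add_apply, Pi.single_eq_of_ne hx,
    Pi.single_eq_of_ne hx', add_zero, add_right_comm]

namespace Contract

variable {s s' : Finset V} {C C' : V → ℤ}

lemma subset (h : Contract G s C s' C') : s' ⊆ s := by
  induction h with
  | refl => exact Subset.rfl
  | step x _ _ _ _ _ _ ih => exact ih.trans (erase_subset x _)

lemma mem_of_forall_not_adj (h : Contract G s C s' C') {x : V} (hx : x ∈ s)
    (hiso : ∀ z ∈ s, ¬ G.Adj x z) : x ∈ s' := by
  induction h with
  | refl => exact hx
  | step x₀ y₀ _ hy₀ hadj₀ _ _ ih =>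
    have hne : x ≠ x₀ := by rintro rfl; exact hiso y₀ hy₀ hadj₀
    exact ih (mem_erase.2 ⟨hne, hx⟩) fun z hz => hiso z (mem_of_mem_erase hz)

lemma trans {s'' : Finset V} {C'' : V → ℤ} (h₁ : Contract G s C s' C')
    (h₂ : Contract G s' C' s'' C'') : Contract G s C s'' C'' := by
  induction h₁ with
  | refl => exact h₂
  | step x y hx hy hadj hleaf _ ih => exact .step x y hx hy hadj hleaf (ih h₂)

lemma erase_leaf (h : Contract G s C s' C') {x y : V} (hx : x ∈ s) (hx' : x ∉ s') (hy : y ∈ s)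
    (hxy : G.Adj x y) (hleaf : ∀ z ∈ s, G.Adj x z → z = y) :
    Contract G (s.erase x) (leafContract C x y) s' C' := by
  induction h with
  | refl => exact absurd hx hx'
  | @step s C x₀ y₀ hx₀ hy₀ hadj₀ hleaf₀ s' C' h ih =>
    by_cases hxx₀ : x = x₀
    · subst hxx₀
      obtain rfl := hleaf₀ y hy hxy
      exact h
    have hyx₀ : y ≠ x₀ := by
      rintro rfl
      -- once `y` is gone, `x` has no neighbour left and can never be contracted
      refine hx' (h.mem_of_forall_not_adj (mem_erase.2 ⟨hxx₀, hx⟩) fun z hz hxz => ?_)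
      exact ne_of_mem_erase hz (hleaf z (mem_of_mem_erase hz) hxz)
    have hy₀x : y₀ ≠ x := by
      rintro rfl
      exact hyx₀ (hleaf x₀ hx₀ hadj₀.symm).symm
    refine .step x₀ y₀ (mem_erase.2 ⟨Ne.symm hxx₀, hx₀⟩) (mem_erase.2 ⟨hy₀x, hy₀⟩) hadj₀
      (fun z hz => hleaf₀ z (mem_of_mem_erase hz)) ?_
    have hrest :
        Contract G ((s.erase x₀).erase x) (leafContract (leafContract C x₀ y₀) x y) s' C' :=
      ih (mem_erase.2 ⟨hxx₀, hx⟩) hx' (mem_erase.2 ⟨hyx₀, hy⟩)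
        fun z hz => hleaf z (mem_of_mem_erase hz)
    rw [erase_right_comm]
    change Contract G _ (leafContract (leafContract C x y) x₀ y₀) s' C'
    rwa [leafContract_comm (Ne.symm hy₀x) (Ne.symm hyx₀)]

lemma unique {C₁ C₂ : V → ℤ} (h₁ : Contract G s C s' C₁) (h₂ : Contract G s C s' C₂) :
    C₁ = C₂ := by
  induction h₁ with
  | refl =>
    cases h₂ with
    | refl => rfl
    | step x _ hx _ _ _ h => exact absurd (h.subset hx) (notMem_erase x _)
  | step x y hx hy hadj hleaf h ih =>
    exact ih (h₂.erase_leaf hx (fun hx' => notMem_erase x _ (h.subset hx')) hy hadj hleaf)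

end Contract

namespace ZStepOn

variable {A B : Set V}

lemma of_adj {C : V → ℤ} {u v : V} (hu : u ∈ A) (hv : v ∈ A) (huv : G.Adj u v) (h2 : 2 ≤ C u) :
    ZStepOn G A C (C - Pi.single u 2 + Pi.single v 1) := by
  refine ⟨u, v, hu, hv, huv, h2, funext fun w => ?_⟩
  by_cases hwu : w = u
  · subst hwu; simp [huv.ne]
  · by_cases hwv : w = v
    · subst hwv; simp [hwu]
    · simp [hwu, hwv]

lemma mono (hAB : A ⊆ B) {C C' : V → ℤ} (h : ZStepOn G A C C') : ZStepOn G B C C' := by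
  obtain ⟨u, v, hu, hv, huv, h2, rfl⟩ := h
  exact ⟨u, v, hAB hu, hAB hv, huv, h2, rfl⟩

lemma add {C C' δ : V → ℤ} (h : ZStepOn G A C C') (hδ : ∀ w ∈ A, 0 ≤ δ w) :
    ZStepOn G A (C + δ) (C' + δ) := by
  obtain ⟨u, v, hu, hv, huv, h2, rfl⟩ := h
  refine ⟨u, v, hu, hv, huv, by simp only [Pi.add_apply]; linarith [hδ u hu], funext fun w => ?_⟩
  simp only [Pi.add_apply]
  split_ifs <;> subst_vars <;> ring

lemma apply_eq_of_notMem {C C' : V → ℤ} (h : ZStepOn G A C C') {w : V} (hw : w ∉ A) :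
    C' w = C w := by
  obtain ⟨u, v, hu, hv, -, -, rfl⟩ := h
  have hwu : w ≠ u := fun h => hw (h ▸ hu)
  have hwv : w ≠ v := fun h => hw (h ▸ hv)
  simp [hwu, hwv]

lemma reflTransGen_mono (hAB : A ⊆ B) {C C' : V → ℤ}
    (h : Relation.ReflTransGen (ZStepOn G A) C C') : Relation.ReflTransGen (ZStepOn G B) C C' :=
  Relation.ReflTransGen.mono (fun _ _ => mono hAB) _ _ h

lemma reflTransGen_add {C C' δ : V → ℤ} (h : Relation.ReflTransGen (ZStepOn G A) C C')
    (hδ : ∀ w ∈ A, 0 ≤ δ w) : Relation.ReflTransGen (ZStepOn G A) (C + δ) (C' + δ) :=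
  h.lift (· + δ) fun _ _ h => h.add hδ

lemma reflTransGen_apply_eq_of_notMem {C C' : V → ℤ}
    (h : Relation.ReflTransGen (ZStepOn G A) C C') {w : V} (hw : w ∉ A) : C' w = C w := by
  induction h with
  | refl => rfl
  | tail _ hstep ih => rw [hstep.apply_eq_of_notMem hw, ih]

lemma reflTransGen_transfer {C : V → ℤ} {u v : V} (hu : u ∈ A) (hv : v ∈ A) (huv : G.Adj u v)
    {k : ℤ} (hk : 0 ≤ k) (hCu : 2 * k ≤ C u) :
    Relation.ReflTransGen (ZStepOn G A) C (C - Pi.single u (2 * k) + Pi.single v k) := by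
  induction k, hk using Int.leInduction with
  | base => simpa using .refl
  | succ k hk ih =>
    refine (ih (by omega)).tail ?_
    convert of_adj (C := C - Pi.single u (2 * k) + Pi.single v k) hu hv huv
      (by simp [huv.ne]; omega) using 1
    simp only [mul_add, mul_one, Pi.single_add]
    abel

end ZStepOn

section LeafUncontraction

variable {A : Set V} {C : V → ℤ} {x y : V}

lemma zSolvableOn_insert_of_nonneg (hx : x ∉ A) (hy : y ∈ A) (hxy : G.Adj x y) (hCx : 0 ≤ C x)
    (h : ZSolvableOn G A (C + Pi.single y (C x / 2))) : ZSolvableOn G (insert x A) C := by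
  obtain ⟨C₀, hreach, hC₀⟩ := h
  set k := C x / 2
  have hC₀x : C₀ x = C x := by
    simpa [hxy.ne] using ZStepOn.reflTransGen_apply_eq_of_notMem hreach hx
  have hmove := ZStepOn.reflTransGen_transfer (C := C) (k := k) (Set.mem_insert x A)
    (Set.mem_insert_of_mem x hy) hxy (by omega) (by omega)
  have hshift := ZStepOn.reflTransGen_add hreach (δ := -Pi.single x (2 * k)) fun w hw => by
    simp [ne_of_mem_of_not_mem hw hx]
  rw [show C - Pi.single x (2 * k) + Pi.single y k = C + Pi.single y k + -Pi.single x (2 * k) by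
    abel] at hmove
  refine ⟨_, hmove.trans (ZStepOn.reflTransGen_mono (Set.subset_insert x A) hshift), ?_⟩
  rintro z (rfl | hz)
  · simp only [Pi.add_apply, Pi.neg_apply, Pi.single_eq_same, hC₀x]
    omega
  · simpa [ne_of_mem_of_not_mem hz hx] using hC₀ z hz

lemma zSolvableOn_insert_of_neg (hx : x ∉ A) (hy : y ∈ A) (hxy : G.Adj x y) (hCx : C x < 0)
    (h : ZSolvableOn G A (C + Pi.single y (2 * C x))) : ZSolvableOn G (insert x A) C := by
  obtain ⟨C₀, hreach, hC₀⟩ := h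
  set k := -C x with hk
  have hC₀x : C₀ x = C x := by
    simpa [hxy.ne] using ZStepOn.reflTransGen_apply_eq_of_notMem hreach hx
  have hshift := ZStepOn.reflTransGen_add hreach (δ := Pi.single y (2 * k)) fun w _ => by
    by_cases hw : w = y
    · subst hw; simp; omega
    · simp [hw]
  have hC : C + Pi.single y (2 * C x) + Pi.single y (2 * k) = C := by
    rw [add_assoc, ← Pi.single_add, hk, mul_neg, add_neg_cancel, Pi.single_zero, add_zero]
  rw [hC] at hshift
  have hmove := ZStepOn.reflTransGen_transfer (C := C₀ + Pi.single y (2 * k)) (k := k)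
    (Set.mem_insert_of_mem x hy) (Set.mem_insert x A) hxy.symm (by omega)
    (by simp; linarith [hC₀ y hy])
  refine ⟨_, (ZStepOn.reflTransGen_mono (Set.subset_insert x A) hshift).trans hmove, ?_⟩
  rintro z (rfl | hz)
  · simp [hC₀x, hk]
  · simpa [ne_of_mem_of_not_mem hz hx] using hC₀ z hz

end LeafUncontraction

lemma Contract.zSolvableOn {s s' : Finset V} {C C' : V → ℤ} (h : Contract G s C s' C')
    (hs : ZSolvableOn G s' C') : ZSolvableOn G s C := by
  induction h with
  | refl => exact hs
  | @step s C x y hx hy hxy _ _ _ _ ih =>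
    have hC : ZSolvableOn G ↑(s.erase x) (C + Pi.single y (leafShare (C x))) := by
      rw [← leafContract_eq_add_single]
      exact ih hs
    have hyA : y ∈ (↑(s.erase x) : Set V) := mem_erase.2 ⟨hxy.ne', hy⟩
    rw [← insert_erase hx, coe_insert]
    by_cases hCx : 0 ≤ C x
    · rw [leafShare, if_pos hCx] at hC
      exact zSolvableOn_insert_of_nonneg (by simp) hyA hxy hCx hC
    · rw [leafShare, if_neg hCx] at hC
      exact zSolvableOn_insert_of_neg (by simp) hyA hxy (not_le.1 hCx) hC

lemma ZStepOn.exists_pebStep {ω D : V → ℕ} {C' : V → ℤ}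
    (h : ZStepOn G Set.univ (fun w => (D w : ℤ) - ω w) C') :
    ∃ D', PebStep G D D' ∧ (fun w => (D' w : ℤ) - ω w) = C' := by
  obtain ⟨u, v, -, -, huv, h2, rfl⟩ := h
  beta_reduce at h2
  refine ⟨_, ⟨u, v, huv, by omega, rfl⟩, funext fun w => ?_⟩
  by_cases hwu : w = u
  · subst hwu; simp only [if_true]; omega
  · by_cases hwv : w = v
    · subst hwv; simp only [if_neg hwu, if_true]; push_cast; ring
    · simp only [if_neg hwu, if_neg hwv]

lemma solvable_of_zSolvableOn_univ {ω D : V → ℕ}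
    (h : ZSolvableOn G Set.univ (fun w => (D w : ℤ) - ω w)) : Solvable G ω D := by
  obtain ⟨C', hreach, hC'⟩ := h
  suffices ∃ D', PebReach G D D' ∧ (fun w => (D' w : ℤ) - ω w) = C' by
    obtain ⟨D', hD', rfl⟩ := this
    exact ⟨D', hD', fun w => by simpa using hC' w trivial⟩
  clear hC'
  induction hreach with
  | refl => exact ⟨D, .refl, rfl⟩
  | tail _ hstep ih =>
    obtain ⟨D₁, hD₁, rfl⟩ := ih
    obtain ⟨D₂, hD₂, rfl⟩ := hstep.exists_pebStep
    exact ⟨D₂, hD₁.tail hD₂, rfl⟩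

lemma SimpleGraph.IsAcyclic.not_adj_of_adj_of_adj {T : SimpleGraph V} (hT : T.IsAcyclic)
    {a b c : V} (hab : T.Adj a b) (hac : T.Adj a c) : ¬ T.Adj b c :=
  fun hbc => hT.cliqueFree le_rfl {a, b, c} (is3Clique_triple_iff.2 ⟨hab, hac, hbc⟩)

lemma contract_star_to_edge {T : SimpleGraph V} (hT : T.IsAcyclic) {c d : V} (hcd : T.Adj c d)
    (M : Finset V) (hM : ∀ n ∈ M, T.Adj c n) (hdM : d ∉ M) (C : V → ℤ) :
    ∃ C', Contract T (insert c (insert d M)) C {c, d} C' ∧ C' d = C d := by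
  induction M using Finset.induction_on generalizing C with
  | empty => exact ⟨C, .refl _ _, rfl⟩
  | insert a M ha ih =>
    have hca := hM a (mem_insert_self a M)
    have had : a ≠ d := fun h => hdM (h ▸ mem_insert_self a M)
    obtain ⟨C', hC', hC'd⟩ := ih (fun n hn => hM n (mem_insert_of_mem hn))
      (fun h => hdM (mem_insert_of_mem h)) (leafContract C a c)
    refine ⟨C', .step a c (by simp) (by simp) hca.symm ?_ ?_, by simp [hC'd, leafContract, hcd.ne']⟩
    · intro z hz haz
      simp only [mem_insert] at hz
      rcases hz with rfl | rfl | rfl | hz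
      · rfl
      · exact absurd haz (hT.not_adj_of_adj_of_adj hca hcd)
      · exact absurd haz (T.loopless.irrefl _)
      · exact absurd haz (hT.not_adj_of_adj_of_adj hca (hM z (mem_insert_of_mem hz)))
    · rwa [erase_insert_of_ne hca.ne, erase_insert_of_ne had.symm, erase_insert ha]

/-- If `D` is not `ω`-solvable and `x ~ y` with `C_x(y) ≥ 0`, then `C_y(x) < 0`. -/
theorem star_contraction_neg (T : SimpleGraph V) [Fintype V] [DecidableRel T.Adj]
    (hT : T.IsTree) (ω D : V → ℕ) (hns : ¬ Solvable T ω D) (x y : V) (hxy : T.Adj x y)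
    (hCx : ∃ Cx : V → ℤ,
      Contract T Finset.univ (fun w => (D w : ℤ) - (ω w : ℤ))
        (insert x (T.neighborFinset x)) Cx ∧ 0 ≤ Cx y) :
    ∀ Cy : V → ℤ,
      Contract T Finset.univ (fun w => (D w : ℤ) - (ω w : ℤ))
        (insert y (T.neighborFinset y)) Cy → Cy x < 0 := by
  intro Cy hCy
  by_contra! hCyx
  obtain ⟨Cx, hCx, hCxy⟩ := hCx
  rw [← insert_erase (show y ∈ T.neighborFinset x by simpa using hxy)] at hCx
  rw [← insert_erase (show x ∈ T.neighborFinset y by simpa using hxy.symm)] at hCy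
  obtain ⟨Ex, hEx, hExy⟩ := contract_star_to_edge hT.isAcyclic hxy _
    (fun n hn => (mem_neighborFinset _ _ _).1 (mem_of_mem_erase hn)) (notMem_erase y _) Cx
  obtain ⟨Ey, hEy, hEyx⟩ := contract_star_to_edge hT.isAcyclic hxy.symm _
    (fun n hn => (mem_neighborFinset _ _ _).1 (mem_of_mem_erase hn)) (notMem_erase x _) Cy
  rw [pair_comm] at hEy
  have hE : Ex = Ey := (hCx.trans hEx).unique (hCy.trans hEy)
  refine hns (solvable_of_zSolvableOn_univ ?_)
  rw [← coe_univ]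
  refine (hCx.trans hEx).zSolvableOn ⟨Ex, .refl, ?_⟩
  rw [coe_pair]
  rintro z (rfl | rfl)
  · rwa [hE, hEyx]
  · rwa [hExy]
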